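/- arXiv:2602.16630 — 5 statements merged into one kernel-verified Lean document; each statement's English description precedes it below -/
import Mathlib

section
/- Let V, A₁, A₂ be points in ℝ² with |VA₁| = |VA₂|, let H be the midpoint of A₁A₂, and let O lie on segment VH with β = ∠A₁VA₂ < α = ∠A₁OA₂ ≤ π. Let P̄ be the intersection of lines A₂O and VA₁, and let P be any point of the open segment V P̄. Set ϑ_A = ∠A₁PO and ϑ_B = ∠A₁PA₂. Then ϑ_B < 2ϑ_A. -/
open Real EuclideanGeometry
open scoped RealInnerProductSpace

/-!
Put the origin at `V`, with `e = A₁ - V` and `f = A₂ - V`. Then `O - V = σ (e + f)` with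
`0 < σ ≤ 1/2`, and `P - V = μ e` with `0 < μ` and `μ (1 - σ) < σ`, the last inequality saying that
`P` comes before `P̄`. Hence `O - P = a (A₁ - P) + σ (A₂ - P)` with `a ≤ σ`, while
`|PA₁| < |PA₂|`, so `a |PA₁| < σ |PA₂|`: the line `PO` meets `A₁A₂` nearer to `A₂` than the
bisector of `∠A₁PA₂` does. For `z = a x + b y` with `a ‖x‖ < b ‖y‖`, comparing cosines gives
`∠(y, z) < ∠(x, z)`, and the triangle inequality `∠(x, y) ≤ ∠(x, z) + ∠(z, y)` for angles then
yields `∠(x, y) < 2 ∠(x, z)`.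
-/

lemma LinearIndependent.pair_sub_smul {K M : Type*} [Field K] [AddCommGroup M] [Module K M]
    {e f : M} (h : LinearIndependent K ![e, f]) {μ : K} (hμ : μ ≠ 1) :
    LinearIndependent K ![e - μ • e, f - μ • e] := by
  rw [LinearIndependent.pair_iff] at h ⊢
  intro s t hst
  obtain ⟨hs, ht⟩ := h (s * (1 - μ) - t * μ) t (by rw [← hst]; module)
  subst ht
  simpa [sub_eq_zero, Ne.symm hμ] using hs

section Module

variable {M : Type*} [AddCommGroup M] [Module ℝ M]

lemma linearIndependent_sub_of_notMem_affineSpan_pair {V A₁ A₂ : M} (hne : A₁ ≠ A₂)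
    (hV : V ∉ line[ℝ, A₁, A₂]) :
    LinearIndependent ℝ ![A₁ - V, A₂ - V] := by
  rw [LinearIndependent.pair_iff]
  intro s t hst
  by_cases hst0 : s + t = 0
  · have : s • (A₁ - A₂) = 0 := by rw [← hst, show t = -s by linarith]; module
    have hs : s = 0 := by simpa [sub_eq_zero, hne] using this
    exact ⟨hs, by linarith⟩
  · refine absurd ?_ hV
    rw [← vsub_vadd V A₁, vadd_left_mem_affineSpan_pair]
    refine ⟨t / (s + t), ?_⟩
    have h : (s + t) • (V - A₁) = t • (A₂ - A₁) := by
      linear_combination (norm := module) (-1 : ℝ) • hst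
    rw [vsub_eq_sub, vsub_eq_sub, div_eq_inv_mul, mul_smul, ← h, smul_smul, inv_mul_cancel₀ hst0,
      one_smul]

lemma exists_sub_eq_smul_add_of_mem_segment_midpoint {V A₁ A₂ O : M}
    (hO : O ∈ segment ℝ V (midpoint ℝ A₁ A₂)) :
    ∃ σ : ℝ, 0 ≤ σ ∧ σ ≤ 1 / 2 ∧ O - V = σ • ((A₁ - V) + (A₂ - V)) := by
  obtain ⟨a, b, ha, hb, hab, rfl⟩ := hO
  obtain rfl : a = 1 - b := by linarith
  refine ⟨b / 2, by linarith, by linarith, ?_⟩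
  rw [midpoint_eq_smul_add, invOf_eq_inv]
  module

lemma exists_sub_eq_smul_of_mem_affineSpan_pair_inter {V A₁ A₂ O Q : M} {σ : ℝ}
    (hind : LinearIndependent ℝ ![A₁ - V, A₂ - V]) (hOV : O - V = σ • ((A₁ - V) + (A₂ - V)))
    (h₁ : Q ∈ line[ℝ, A₂, O]) (h₂ : Q ∈ line[ℝ, V, A₁]) :
    ∃ x : ℝ, Q - V = x • (A₁ - V) ∧ x * (1 - σ) = σ := by
  rw [← vsub_vadd Q V, vadd_left_mem_affineSpan_pair] at h₂
  rw [← vsub_vadd Q A₂, vadd_left_mem_affineSpan_pair] at h₁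
  obtain ⟨x, hx⟩ := h₂
  obtain ⟨y, hy⟩ := h₁
  simp only [vsub_eq_sub] at hx hy
  have hQ : (x - y * σ) • (A₁ - V) + (y * (1 - σ) - 1) • (A₂ - V) = 0 := by
    have hOA₂ : O - A₂ = (O - V) - (A₂ - V) := by abel
    rw [hOA₂, hOV] at hy
    linear_combination (norm := module) hx - hy
  obtain ⟨h₁, h₂⟩ := LinearIndependent.pair_iff.1 hind _ _ hQ
  exact ⟨x, hx.symm, by linear_combination (1 - σ) * h₁ + σ * h₂⟩

lemma exists_sub_eq_smul_of_mem_openSegment {V Q P e : M} {x σ : ℝ} (hσ0 : 0 < σ)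
    (hσ : σ ≤ 1 / 2)
    (hQ : Q - V = x • e) (hx : x * (1 - σ) = σ) (hP : P ∈ openSegment ℝ V Q) :
    ∃ μ : ℝ, P - V = μ • e ∧ 0 < μ ∧ μ * (1 - σ) < σ := by
  obtain ⟨a, t, ha, ht0, hat, rfl⟩ := hP
  obtain rfl : a = 1 - t := by linarith
  have hxpos : 0 < x := pos_of_mul_pos_left (hx ▸ hσ0) (by linarith)
  refine ⟨t * x, ?_, mul_pos ht0 hxpos, ?_⟩
  · rw [mul_smul, ← hQ]
    module
  · rw [mul_assoc, hx]
    nlinarith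

end Module

namespace InnerProductGeometry

variable {E : Type*} [NormedAddCommGroup E] [InnerProductSpace ℝ E]

lemma real_inner_lt_norm_mul_norm_of_linearIndependent {x y : E}
    (h : LinearIndependent ℝ ![x, y]) : ⟪x, y⟫ < ‖x‖ * ‖y‖ := by
  refine inner_lt_norm_mul_iff_real.2 fun heq => h.ne_zero 1 ?_
  simpa using
    (LinearIndependent.pair_iff.1 h ‖y‖ (-‖x‖) (by rw [heq, neg_smul, add_neg_cancel])).1

lemma inner_smul_add_smul_mul_norm_sub (x y : E) (a b : ℝ) :
    ⟪x, a • x + b • y⟫ * ‖y‖ - ⟪y, a • x + b • y⟫ * ‖x‖ =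
      (a * ‖x‖ - b * ‖y‖) * (‖x‖ * ‖y‖ - ⟪x, y⟫) := by
  simp only [inner_add_right, real_inner_smul_right, real_inner_self_eq_norm_sq,
    real_inner_comm x y]
  ring

variable {x y : E} {a b : ℝ}

lemma angle_smul_add_smul_lt_angle (hxy : ⟪x, y⟫ < ‖x‖ * ‖y‖) (hab : a * ‖x‖ < b * ‖y‖) :
    angle y (a • x + b • y) < angle x (a • x + b • y) := by
  set z := a • x + b • y
  have hcross : ⟪x, z⟫ * ‖y‖ < ⟪y, z⟫ * ‖x‖ := by
    have := inner_smul_add_smul_mul_norm_sub x y a b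
    nlinarith
  have hz : z ≠ 0 := fun hz => by simp [hz] at hcross
  have hx : x ≠ 0 := fun hx => by simp [hx] at hxy
  have hy : y ≠ 0 := fun hy => by simp [hy] at hxy
  refine Real.arccos_lt_arccos (abs_le.1 (abs_real_inner_div_norm_mul_norm_le_one x z)).1 ?_
    (abs_le.1 (abs_real_inner_div_norm_mul_norm_le_one y z)).2
  rw [div_lt_div_iff₀ (by positivity) (by positivity)]
  nlinarith [norm_pos_iff.2 hz]

theorem angle_lt_two_mul_angle_smul_add_smul (hxy : ⟪x, y⟫ < ‖x‖ * ‖y‖)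
    (hab : a * ‖x‖ < b * ‖y‖) : angle x y < 2 * angle x (a • x + b • y) := by
  have := angle_smul_add_smul_lt_angle hxy hab
  calc angle x y ≤ angle x (a • x + b • y) + angle (a • x + b • y) y :=
        angle_le_angle_add_angle _ _ _
    _ < 2 * angle x (a • x + b • y) := by rw [angle_comm _ y]; linarith

lemma norm_sub_smul_lt_norm_sub_smul {e f : E} {μ : ℝ} (hef : ‖e‖ = ‖f‖)
    (hlt : ⟪e, f⟫ < ‖e‖ * ‖f‖) (hμ : 0 < μ) : ‖e - μ • e‖ < ‖f - μ • e‖ := by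
  refine lt_of_pow_lt_pow_left₀ 2 (norm_nonneg _) ?_
  rw [norm_sub_sq_real, norm_sub_sq_real, real_inner_smul_right, real_inner_smul_right,
    real_inner_self_eq_norm_sq, real_inner_comm, ← hef]
  rw [← hef] at hlt
  nlinarith [mul_pos hμ (sub_pos.2 hlt)]

theorem angle_sub_smul_lt_two_mul_angle {e f : E} (hind : LinearIndependent ℝ ![e, f])
    (hef : ‖e‖ = ‖f‖) {σ μ : ℝ} (hσ : σ ≤ 1 / 2) (hμ0 : 0 < μ) (hμ : μ * (1 - σ) < σ) :
    angle (e - μ • e) (f - μ • e) < 2 * angle (e - μ • e) (σ • (e + f) - μ • e) := by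
  have hσ0 : 0 < σ := by nlinarith
  have hμ1 : μ < 1 := by nlinarith
  set a := (σ - μ * (1 - σ)) / (1 - μ)
  have ha : a * (1 - μ) = σ - μ * (1 - σ) := div_mul_cancel₀ _ (by linarith)
  have haσ : a ≤ σ := by nlinarith
  have hO : σ • (e + f) - μ • e = a • (e - μ • e) + σ • (f - μ • e) := by
    linear_combination (norm := module) -ha • e
  have hdist := norm_sub_smul_lt_norm_sub_smul hef
    (real_inner_lt_norm_mul_norm_of_linearIndependent hind) hμ0
  rw [hO]
  refine angle_lt_two_mul_angle_smul_add_smul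
    (real_inner_lt_norm_mul_norm_of_linearIndependent (hind.pair_sub_smul hμ1.ne)) ?_
  calc a * ‖e - μ • e‖ ≤ σ * ‖e - μ • e‖ := by gcongr
    _ < σ * ‖f - μ • e‖ := by gcongr

end InnerProductGeometry

theorem stmt5_general (V A₁ A₂ H O Pbar P : EuclideanSpace ℝ (Fin 2)) (α β ϑA ϑB : ℝ)
    (hiso : dist V A₁ = dist V A₂)
    (hH : H = midpoint ℝ A₁ A₂)
    (hO : O ∈ segment ℝ V H)
    (hnd : V ∉ affineSpan ℝ ({A₁, A₂} : Set (EuclideanSpace ℝ (Fin 2))))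
    (hβdef : β = ∠ A₁ V A₂)
    (hαdef : α = ∠ A₁ O A₂)
    (hβpos : 0 < β) (hβα : β < α)
    (hPbar₁ : Pbar ∈ affineSpan ℝ ({A₂, O} : Set (EuclideanSpace ℝ (Fin 2))))
    (hPbar₂ : Pbar ∈ affineSpan ℝ ({V, A₁} : Set (EuclideanSpace ℝ (Fin 2))))
    (hP : P ∈ openSegment ℝ V Pbar)
    (hϑA : ϑA = ∠ A₁ P O) (hϑB : ϑB = ∠ A₁ P A₂) :
    ϑB < 2 * ϑA := by
  have hA₁V : A₁ ≠ V := fun h => hnd (h ▸ left_mem_affineSpan_pair ℝ A₁ A₂)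
  have hA₁A₂ : A₁ ≠ A₂ := by
    rintro rfl
    rw [angle_self_of_ne hA₁V] at hβdef
    linarith
  have hind := linearIndependent_sub_of_notMem_affineSpan_pair hA₁A₂ hnd
  subst hH
  obtain ⟨σ, hσ0, hσ, hOV⟩ := exists_sub_eq_smul_add_of_mem_segment_midpoint hO
  have hσpos : 0 < σ := by
    refine hσ0.lt_of_ne fun h => hβα.ne ?_
    have hOV' : O = V := sub_eq_zero.1 (by simpa [← h] using hOV)
    rw [hβdef, hαdef, hOV']
  obtain ⟨x, hPbar, hx⟩ :=
    exists_sub_eq_smul_of_mem_affineSpan_pair_inter hind hOV hPbar₁ hPbar₂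
  obtain ⟨μ, hPV, hμ0, hμ⟩ := exists_sub_eq_smul_of_mem_openSegment hσpos hσ hPbar hx hP
  have hnorm : ‖A₁ - V‖ = ‖A₂ - V‖ := by
    rwa [← dist_eq_norm, ← dist_eq_norm, dist_comm, dist_comm A₂]
  have hsub : ∀ Q : EuclideanSpace ℝ (Fin 2), Q -ᵥ P = (Q - V) - μ • (A₁ - V) := fun Q => by
    rw [← hPV, vsub_eq_sub]; abel
  rw [hϑA, hϑB, EuclideanGeometry.angle, EuclideanGeometry.angle, hsub A₁, hsub A₂, hsub O, hOV]
  exact InnerProductGeometry.angle_sub_smul_lt_two_mul_angle hind hnorm hσ hμ0 hμ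

/-- In the isosceles triangle `V A₂ A₁` with `|VA₁| = |VA₂|`, midpoint `H` of `A₁A₂`,
`O` on segment `VH` with `β = ∠A₁VA₂ < α = ∠A₁OA₂ ≤ π`, `P̄` the intersection of
lines `A₂O` and `VA₁`, and `P` on the open segment `V P̄`, the angles
`ϑ_A = ∠A₁PO` and `ϑ_B = ∠A₁PA₂` satisfy `ϑ_B < 2ϑ_A`. -/
theorem stmt5 (V A₁ A₂ H O Pbar P : EuclideanSpace ℝ (Fin 2)) (α β ϑA ϑB : ℝ)
    (hiso : dist V A₁ = dist V A₂)
    (hH : H = midpoint ℝ A₁ A₂)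
    (hO : O ∈ segment ℝ V H)
    (hnd : V ∉ affineSpan ℝ ({A₁, A₂} : Set (EuclideanSpace ℝ (Fin 2))))
    (hβdef : β = ∠ A₁ V A₂)
    (hαdef : α = ∠ A₁ O A₂)
    (hβpos : 0 < β) (hβα : β < α) (hαπ : α ≤ π)
    (hPbar₁ : Pbar ∈ affineSpan ℝ ({A₂, O} : Set (EuclideanSpace ℝ (Fin 2))))
    (hPbar₂ : Pbar ∈ affineSpan ℝ ({V, A₁} : Set (EuclideanSpace ℝ (Fin 2))))
    (hP : P ∈ openSegment ℝ V Pbar)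
    (hϑA : ϑA = ∠ A₁ P O) (hϑB : ϑB = ∠ A₁ P A₂) :
    ϑB < 2 * ϑA :=
  stmt5_general V A₁ A₂ H O Pbar P α β ϑA ϑB hiso hH hO hnd hβdef hαdef hβpos hβα hPbar₁ hPbar₂ hP
    hϑA hϑB
end

section
/- In the configuration of the isosceles triangle VA₂A₁ with apex angle β, O on segment VH with ∠A₁OA₂ = α ∈ (β, π], and P on the open segment V P̄: if β ≤ 2π/3, then 2ϑ_B − ϑ_A < π, where ϑ_A = ∠A₁PO and ϑ_B = ∠A₁PA₂. -/
open Real EuclideanGeometry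

set_option maxHeartbeats 1000000

open RealInnerProductSpace

private lemma aux_angle (θA θB : ℝ) (hA0 : 0 ≤ θA) (hBπ : θB ≤ π)
    (key : 0 < Real.sin θB * Real.sin θA + Real.cos θB * Real.cos θA + Real.cos θB) :
    2 * θB - θA < π := by
  by_contra hc
  push_neg at hc
  have h1 : Real.cos (θB - θA) ≤ Real.cos (π - θB) :=
    Real.cos_le_cos_of_nonneg_of_le_pi (by linarith) (by linarith) (by linarith)
  rw [Real.cos_pi_sub, Real.cos_sub] at h1
  linarith


private lemma pos_of_sq_pos {x c : ℝ} (hx : 0 ≤ x) (hc : 0 < c) (h : x^2 = c) : 0 < x := by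
  rcases hx.lt_or_eq with h1 | h1
  · exact h1
  · exfalso; rw [← h1] at h; simp at h; rw [← h] at hc; simp at hc


private lemma lem_hps {s p : ℝ} (hs1 : s ≤ 1) (hp : 0 < p) (hσ : 0 < s*(1+p) - 2*p) :
    p < s := by nlinarith

private lemma lem_q2 {a b nu2 nw2 : ℝ} (hb : 0 < b) (hU : 0 < nu2) (hM : 0 < nw2) :
    0 < a^2 * nu2 + b^2 * nw2 := by
  have h1 : 0 ≤ a^2 * nu2 := mul_nonneg (sq_nonneg a) (le_of_lt hU)
  have h2 : 0 < b^2 * nw2 := mul_pos (pow_pos hb 2) hM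
  linarith

private lemma main_alg (nu nw s p q1 q2 q3 : ℝ)
    (hnu : 0 < nu) (hnw : 0 < nw) (h3U : nw^2 ≤ 3*nu^2)
    (hs : 0 < s) (hs1 : s ≤ 1) (hp : 0 < p) (hσ : 0 < s*(1+p) - 2*p)
    (hq1 : 0 < q1) (hq2 : 0 < q2) (hq3 : 0 < q3)
    (hq1sq : q1^2 = nu^2 + nw^2) (hq2sq : q2^2 = (s-p)^2*nu^2 + p^2*nw^2)
    (hq3sq : q3^2 = (1-p)^2*nu^2 + (1+p)^2*nw^2) :
    0 < 2 * (nu * nw) / (q1 * q3) * (s * (nu * nw) / (q1 * q2))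
      + ((1 - p) * nu^2 - (1 + p) * nw^2) / (q1 * q3) * (((s - p) * nu^2 - p * nw^2) / (q1 * q2))
      + ((1 - p) * nu^2 - (1 + p) * nw^2) / (q1 * q3) := by
  have hU : 0 < nu^2 := pow_pos hnu 2
  have hM : 0 < nw^2 := pow_pos hnw 2
  have hps : p < s := by nlinarith
  have hp1 : p < 1 := lt_of_lt_of_le hps hs1
  set X : ℝ := (s - p) * nu^2 - p * nw^2 with hX_def
  set Y : ℝ := (1 - p) * nu^2 - (1 + p) * nw^2 with hY_def
  set Z : ℝ := X * Y + 2 * s * nu^2 * nw^2 with hZ_def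
  have hZpos : 0 < Z := by
    have hid : Z = (s - p) * (1 - p) * (nu^2 * nu^2) + (s - s*p + 2*p^2) * (nu^2 * nw^2)
        + p * (1 + p) * (nw^2 * nw^2) := by rw [hZ_def, hX_def, hY_def]; ring
    have t1 : 0 < (s - p) * (1 - p) * (nu^2 * nu^2) :=
      mul_pos (mul_pos (by linarith) (by linarith)) (mul_pos hU hU)
    have t2 : 0 < (s - s*p + 2*p^2) * (nu^2 * nw^2) := by
      apply mul_pos _ (mul_pos hU hM)
      nlinarith [mul_pos hp hp, mul_pos hs (show (0:ℝ) < 1 - p by linarith)]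
    have t3 : 0 < p * (1 + p) * (nw^2 * nw^2) :=
      mul_pos (mul_pos hp (by linarith)) (mul_pos hM hM)
    linarith [hid.symm ▸ add_pos (add_pos t1 t2) t3]
  have hG : 0 < (1 - p) * ((3 + p) * s - 4 * p) * nu^2
      + (1 + p) * (4 * p - (1 + p) * s) * nw^2 := by
    have hA' : 0 < (1 - p) * ((3 + p) * s - 4 * p) := by
      apply mul_pos (by linarith)
      nlinarith
    rcases le_or_gt ((1 + p) * (4 * p - (1 + p) * s)) 0 with hC | hC
    · have h8 : 0 < (1 - p) * ((3 + p) * s - 4 * p)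
          + 3 * ((1 + p) * (4 * p - (1 + p) * s)) := by
        nlinarith [mul_le_mul_of_nonneg_right hs1 (show (0:ℝ) ≤ 2 + p by linarith)]
      nlinarith [mul_nonneg (neg_nonneg.mpr hC) (sub_nonneg.mpr h3U), mul_pos h8 hU]
    · nlinarith [mul_pos hA' hU, mul_pos hC hM]
  have hZY : 0 < Z + Y * (q1 * q2) := by
    rcases le_or_gt 0 Y with hY | hY
    · have h1 : 0 ≤ Y * (q1 * q2) := mul_nonneg hY (by positivity)
      linarith
    · have hEid : Z^2 - Y^2 * ((nu^2 + nw^2) * ((s - p)^2 * nu^2 + p^2 * nw^2))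
          = nu^2 * nw^2 * s * (nu^2 + nw^2)
            * ((1 - p) * ((3 + p) * s - 4 * p) * nu^2
              + (1 + p) * (4 * p - (1 + p) * s) * nw^2) := by
        rw [hZ_def, hX_def, hY_def]; ring
      have hsq : (Y * (q1 * q2))^2 < Z^2 := by
        have h2 : (Y * (q1 * q2))^2
            = Y^2 * ((nu^2 + nw^2) * ((s - p)^2 * nu^2 + p^2 * nw^2)) := by
          rw [mul_pow, mul_pow, hq1sq, hq2sq]
        have h3 : 0 < nu^2 * nw^2 * s * (nu^2 + nw^2)
            * ((1 - p) * ((3 + p) * s - 4 * p) * nu^2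
              + (1 + p) * (4 * p - (1 + p) * s) * nw^2) :=
          mul_pos (mul_pos (mul_pos (mul_pos hU hM) hs) (by linarith)) hG
        nlinarith [hEid]
      nlinarith [hsq, hZpos]
  have heq : 2 * (nu * nw) / (q1 * q3) * (s * (nu * nw) / (q1 * q2))
      + Y / (q1 * q3) * (X / (q1 * q2)) + Y / (q1 * q3)
      = (Z + Y * (q1 * q2)) / (q1^2 * q2 * q3) := by
    rw [hZ_def]
    field_simp
    ring
  rw [heq]
  exact div_pos hZY (by positivity)

/-- In the isosceles triangle `V A₂ A₁` with `|VA₁| = |VA₂|`, midpoint `H` of `A₁A₂`,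
`O` on segment `VH` with `β = ∠A₁VA₂ < α = ∠A₁OA₂ ≤ π`, `P̄` the intersection of
lines `A₂O` and `VA₁`, and `P` on the open segment `V P̄`, the angles
`ϑ_A = ∠A₁PO` and `ϑ_B = ∠A₁PA₂` satisfy: if `β ≤ 2π/3` then `2ϑ_B − ϑ_A < π`. -/
theorem stmt7 (V A₁ A₂ H O Pbar P : EuclideanSpace ℝ (Fin 2)) (α β ϑA ϑB : ℝ)
    (hiso : dist V A₁ = dist V A₂)
    (hH : H = midpoint ℝ A₁ A₂)
    (hO : O ∈ segment ℝ V H)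
    (hnd : V ∉ affineSpan ℝ ({A₁, A₂} : Set (EuclideanSpace ℝ (Fin 2))))
    (hβdef : β = ∠ A₁ V A₂)
    (hαdef : α = ∠ A₁ O A₂)
    (hβpos : 0 < β) (hβα : β < α) (hαπ : α ≤ π)
    (hPbar₁ : Pbar ∈ affineSpan ℝ ({A₂, O} : Set (EuclideanSpace ℝ (Fin 2))))
    (hPbar₂ : Pbar ∈ affineSpan ℝ ({V, A₁} : Set (EuclideanSpace ℝ (Fin 2))))
    (hP : P ∈ openSegment ℝ V Pbar)
    (hϑA : ϑA = ∠ A₁ P O) (hϑB : ϑB = ∠ A₁ P A₂)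
    (hβ23 : β ≤ 2 * π / 3) :
    2 * ϑB - ϑA < π := by
  -- basic vectors
  set u : EuclideanSpace ℝ (Fin 2) := H - V with hu_def
  set w : EuclideanSpace ℝ (Fin 2) := A₂ - H with hw_def
  have hsum : H + H = A₁ + A₂ := by rw [hH]; exact midpoint_add_self ℝ A₁ A₂
  have hA2V : A₂ - V = u + w := by rw [hu_def, hw_def]; abel
  have hA1V : A₁ - V = u - w := by
    have h1 : A₁ = H + H - A₂ := by rw [hsum]; abel
    rw [h1, hu_def, hw_def]; abel
  -- nondegeneracy
  have hA1ne : A₁ ≠ V := by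
    intro h
    exact hnd (h ▸ mem_affineSpan ℝ (Set.mem_insert _ _))
  have hA2ne : A₂ ≠ V := by
    intro h
    exact hnd (h ▸ mem_affineSpan ℝ (Set.mem_insert_of_mem _ (Set.mem_singleton _)))
  have huwne : u - w ≠ 0 := by rw [← hA1V]; exact sub_ne_zero.mpr hA1ne
  have hw0 : w ≠ 0 := by
    intro h
    have h12 : A₁ = A₂ := by
      have h1 := hA1V; have h2 := hA2V
      rw [h, sub_zero] at h1; rw [h, add_zero] at h2
      exact sub_left_inj.mp (h1.trans h2.symm)
    have hb0 : β = 0 := by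
      rw [hβdef, h12]
      exact InnerProductGeometry.angle_self (sub_ne_zero.mpr hA2ne)
    linarith
  have hu0 : u ≠ 0 := by
    intro h
    have hHV : H = V := sub_eq_zero.mp h
    apply hnd
    rw [← hHV, hH]
    exact AffineMap.lineMap_mem_affineSpan_pair _ _ _
  -- orthogonality
  have hnorm12 : ‖u - w‖ = ‖u + w‖ := by
    rw [← hA1V, ← hA2V]
    have e1 : dist V A₁ = ‖A₁ - V‖ := by rw [dist_eq_norm, norm_sub_rev]
    have e2 : dist V A₂ = ‖A₂ - V‖ := by rw [dist_eq_norm, norm_sub_rev]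
    rw [e1, e2] at hiso; exact hiso
  have huw : ⟪u, w⟫ = 0 := by
    have h1 : ‖u - w‖^2 = ‖u + w‖^2 := by rw [hnorm12]
    rw [norm_sub_sq_real, norm_add_sq_real] at h1
    linarith
  have hwu : ⟪w, u⟫ = 0 := by rw [real_inner_comm]; exact huw
  set nu : ℝ := ‖u‖ with hnu_def
  set nw : ℝ := ‖w‖ with hnw_def
  have huu : ⟪u, u⟫ = nu^2 := real_inner_self_eq_norm_sq u
  have hww : ⟪w, w⟫ = nw^2 := real_inner_self_eq_norm_sq w
  have hUpos : 0 < nu^2 := pow_pos (norm_pos_iff.mpr hu0) 2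
  have hMpos : 0 < nw^2 := pow_pos (norm_pos_iff.mpr hw0) 2
  -- the parameter s for O on [V,H]
  obtain ⟨a, s, ha0, hs0, has, hOeq⟩ := hO
  have hs1 : s ≤ 1 := by linarith
  have hOV : O - V = s • u := by
    rw [← hOeq, hu_def, show a = 1 - s by linarith]
    module
  have hspos : 0 < s := by
    rcases hs0.lt_or_eq with h | h
    · exact h
    · exfalso
      have hOV' : O = V := by
        have := hOV; rw [← h, zero_smul] at this; exact sub_eq_zero.mp this
      rw [hαdef, hOV', ← hβdef] at hβα
      exact lt_irrefl _ hβα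
  -- β ≤ 2π/3 gives nw² ≤ 3 nu²
  have hq1sub : ‖u - w‖^2 = nu^2 + nw^2 := by rw [norm_sub_sq_real, huw]; ring
  have hq1add : ‖u + w‖^2 = nu^2 + nw^2 := by rw [norm_add_sq_real, huw]; ring
  have h3U : nw^2 ≤ 3 * nu^2 := by
    have hβ0 : 0 ≤ β := le_of_lt hβpos
    have hπ3 : 2*π/3 ≤ π := by linarith [Real.pi_pos]
    have h1 : Real.cos (2*π/3) ≤ Real.cos β :=
      Real.cos_le_cos_of_nonneg_of_le_pi hβ0 hπ3 hβ23
    have h2 : Real.cos (2*π/3) = -(1/2) := by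
      rw [show (2*π/3 : ℝ) = π - π/3 by ring, Real.cos_pi_sub, Real.cos_pi_div_three]
    have h3 : Real.cos β = (nu^2 - nw^2) / (nu^2 + nw^2) := by
      rw [hβdef]
      show Real.cos (InnerProductGeometry.angle (A₁ -ᵥ V) (A₂ -ᵥ V)) = _
      rw [InnerProductGeometry.cos_angle, vsub_eq_sub, vsub_eq_sub, hA1V, hA2V]
      have hin : ⟪u - w, u + w⟫ = nu^2 - nw^2 := by
        rw [inner_sub_left, inner_add_right, inner_add_right, huu, hww, huw, hwu]; ring
      have hnn : ‖u - w‖ * ‖u + w‖ = nu^2 + nw^2 := by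
        rw [← hnorm12, ← sq, hq1sub]
      rw [hin, hnn]
    rw [h2, h3] at h1
    have hden : 0 < nu^2 + nw^2 := by linarith
    rw [le_div_iff₀ hden] at h1
    linarith
  -- parametrize Pbar
  obtain ⟨r, hr⟩ : ∃ r : ℝ, r • (A₁ -ᵥ V) = Pbar -ᵥ V :=
    vadd_left_mem_affineSpan_pair.mp (by rwa [vsub_vadd])
  obtain ⟨d, hd⟩ : ∃ d : ℝ, d • (O -ᵥ A₂) = Pbar -ᵥ A₂ :=
    vadd_left_mem_affineSpan_pair.mp (by rwa [vsub_vadd])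
  rw [vsub_eq_sub, vsub_eq_sub] at hr hd
  have hPbarV : Pbar - V = r • (u - w) := by rw [← hr, hA1V]
  have hOA2 : O - A₂ = (s - 1) • u - w := by
    have h1 : O - A₂ = (O - V) - (A₂ - V) := by abel
    rw [h1, hOV, hA2V]; module
  have hvec : d • ((s - 1) • u - w) = r • (u - w) - (u + w) := by
    rw [← hOA2, hd, show Pbar - A₂ = (Pbar - V) - (A₂ - V) by abel, hPbarV, hA2V]
  have e1 : ⟪u, d • ((s - 1) • u - w)⟫ = ⟪u, r • (u - w) - (u + w)⟫ := by rw [hvec]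
  have e2 : ⟪w, d • ((s - 1) • u - w)⟫ = ⟪w, r • (u - w) - (u + w)⟫ := by rw [hvec]
  simp only [inner_sub_right, inner_add_right, real_inner_smul_right, huu, hww, huw, hwu] at e1 e2
  have h6 : d * (s - 1) = r - 1 := by
    have h6' : (d * (s - 1)) * nu^2 = (r - 1) * nu^2 := by linear_combination e1
    exact mul_right_cancel₀ (ne_of_gt hUpos) h6'
  have h7 : d = r + 1 := by
    have h7' : d * nw^2 = (r + 1) * nw^2 := by linear_combination -e2
    exact mul_right_cancel₀ (ne_of_gt hMpos) h7'
  have hr2s : r * (2 - s) = s := by linear_combination -h6 + (s - 1) * h7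
  have hrpos : 0 < r := by
    have h2s : (0:ℝ) < 2 - s := by linarith
    have hreq : r = s / (2 - s) := (eq_div_iff (ne_of_gt h2s)).mpr hr2s
    rw [hreq]; exact div_pos hspos h2s
  -- parametrize P
  obtain ⟨a', b', ha', hb', hab', hPeq⟩ := hP
  obtain ⟨p, hppos, hp2s, hPV⟩ : ∃ p : ℝ, 0 < p ∧ p * (2 - s) < s ∧ P - V = p • (u - w) := by
    refine ⟨b' * r, mul_pos hb' hrpos, ?_, ?_⟩
    · have hb'1 : b' < 1 := by linarith
      have h1 : b' * s < 1 * s := mul_lt_mul_of_pos_right hb'1 hspos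
      calc b' * r * (2 - s) = b' * (r * (2 - s)) := by ring
      _ = b' * s := by rw [hr2s]
      _ < 1 * s := h1
      _ = s := one_mul s
    · have h1 : P - V = b' • (Pbar - V) := by
        rw [← hPeq, show a' = 1 - b' by linarith]
        module
      rw [h1, hPbarV, smul_smul]
  have hσ : 0 < s * (1 + p) - 2 * p := by
    have h := hp2s
    linarith [h, show s * (1 + p) - 2 * p = s - p * (2 - s) by ring]
  have hps : p < s := lem_hps hs1 hppos hσ
  have hp1 : p < 1 := lt_of_lt_of_le hps hs1
  -- vectors at P
  have hx : A₁ - P = (1 - p) • (u - w) := by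
    rw [show A₁ - P = (A₁ - V) - (P - V) by abel, hA1V, hPV]
    module
  have hy : O - P = (s - p) • u + p • w := by
    rw [show O - P = (O - V) - (P - V) by abel, hOV, hPV]
    module
  have hz : A₂ - P = (1 - p) • u + (1 + p) • w := by
    rw [show A₂ - P = (A₂ - V) - (P - V) by abel, hA2V, hPV]
    module
  -- norms
  set q1 : ℝ := ‖u - w‖ with hq1_def
  have hq1sq : q1^2 = nu^2 + nw^2 := hq1sub
  have hq1pos : 0 < q1 := norm_pos_iff.mpr huwne
  set q2 : ℝ := ‖(s - p) • u + p • w‖ with hq2_def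
  have hq2sq : q2^2 = (s - p)^2 * nu^2 + p^2 * nw^2 := by
    rw [hq2_def, ← real_inner_self_eq_norm_sq]
    simp only [inner_add_left, inner_add_right, inner_sub_left, inner_sub_right,
      real_inner_smul_left, real_inner_smul_right, huu, hww, huw, hwu]
    ring
  have hq2pos : 0 < q2 := pos_of_sq_pos (norm_nonneg _) (lem_q2 hppos hUpos hMpos) hq2sq
  set q3 : ℝ := ‖(1 - p) • u + (1 + p) • w‖ with hq3_def
  have hq3sq : q3^2 = (1 - p)^2 * nu^2 + (1 + p)^2 * nw^2 := by
    rw [hq3_def, ← real_inner_self_eq_norm_sq]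
    simp only [inner_add_left, inner_add_right, inner_sub_left, inner_sub_right,
      real_inner_smul_left, real_inner_smul_right, huu, hww, huw, hwu]
    ring
  have hq3pos : 0 < q3 :=
    pos_of_sq_pos (norm_nonneg _) (lem_q2 (by linarith : (0:ℝ) < 1 + p) hUpos hMpos) hq3sq
  -- inner products and norms of the angle vectors
  have hinnA : ⟪A₁ - P, O - P⟫ = (1 - p) * ((s - p) * nu^2 - p * nw^2) := by
    rw [hx, hy]
    simp only [inner_add_left, inner_add_right, inner_sub_left, inner_sub_right,
      real_inner_smul_left, real_inner_smul_right, huu, hww, huw, hwu]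
    ring
  have hinnB : ⟪A₁ - P, A₂ - P⟫ = (1 - p) * ((1 - p) * nu^2 - (1 + p) * nw^2) := by
    rw [hx, hz]
    simp only [inner_add_left, inner_add_right, inner_sub_left, inner_sub_right,
      real_inner_smul_left, real_inner_smul_right, huu, hww, huw, hwu]
    ring
  have hnormx : ‖A₁ - P‖ = (1 - p) * q1 := by
    rw [hx, norm_smul, hq1_def, Real.norm_eq_abs, abs_of_pos (by linarith : (0:ℝ) < 1 - p)]
  have hnormy : ‖O - P‖ = q2 := by rw [hy]
  have hnormz : ‖A₂ - P‖ = q3 := by rw [hz]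
  -- angle facts
  have hA0 : 0 ≤ ϑA := hϑA ▸ EuclideanGeometry.angle_nonneg _ _ _
  have hAπ : ϑA ≤ π := hϑA ▸ EuclideanGeometry.angle_le_pi _ _ _
  have hB0 : 0 ≤ ϑB := hϑB ▸ EuclideanGeometry.angle_nonneg _ _ _
  have hBπ : ϑB ≤ π := hϑB ▸ EuclideanGeometry.angle_le_pi _ _ _
  have hcosA : Real.cos ϑA = ((s - p) * nu^2 - p * nw^2) / (q1 * q2) := by
    rw [hϑA]
    show Real.cos (InnerProductGeometry.angle (A₁ -ᵥ P) (O -ᵥ P)) = _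
    rw [InnerProductGeometry.cos_angle, vsub_eq_sub, vsub_eq_sub, hinnA, hnormx, hnormy]
    rw [mul_assoc]
    exact mul_div_mul_left _ _ (ne_of_gt (by linarith : (0:ℝ) < 1 - p))
  have hcosB : Real.cos ϑB = ((1 - p) * nu^2 - (1 + p) * nw^2) / (q1 * q3) := by
    rw [hϑB]
    show Real.cos (InnerProductGeometry.angle (A₁ -ᵥ P) (A₂ -ᵥ P)) = _
    rw [InnerProductGeometry.cos_angle, vsub_eq_sub, vsub_eq_sub, hinnB, hnormx, hnormz]
    rw [mul_assoc]
    exact mul_div_mul_left _ _ (ne_of_gt (by linarith : (0:ℝ) < 1 - p))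
  -- sines
  have hkey1 : (q1 * q2)^2 - ((s - p) * nu^2 - p * nw^2)^2 = (s * (nu * nw))^2 := by
    rw [mul_pow, hq1sq, hq2sq]; ring
  have hkey2 : (q1 * q3)^2 - ((1 - p) * nu^2 - (1 + p) * nw^2)^2 = (2 * (nu * nw))^2 := by
    rw [mul_pow, hq1sq, hq3sq]; ring
  have hnupos : 0 < nu := norm_pos_iff.mpr hu0
  have hnwpos : 0 < nw := norm_pos_iff.mpr hw0
  have hsinA : Real.sin ϑA = s * (nu * nw) / (q1 * q2) := by
    rw [Real.sin_eq_sqrt_one_sub_cos_sq hA0 hAπ, hcosA]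
    have h1 : 1 - (((s - p) * nu^2 - p * nw^2) / (q1 * q2))^2
        = (s * (nu * nw) / (q1 * q2))^2 := by
      rw [div_pow, div_pow, eq_div_iff (by positivity)]
      field_simp
      linear_combination hkey1
    rw [h1, Real.sqrt_sq (by positivity)]
  have hsinB : Real.sin ϑB = 2 * (nu * nw) / (q1 * q3) := by
    rw [Real.sin_eq_sqrt_one_sub_cos_sq hB0 hBπ, hcosB]
    have h1 : 1 - (((1 - p) * nu^2 - (1 + p) * nw^2) / (q1 * q3))^2
        = (2 * (nu * nw) / (q1 * q3))^2 := by
      rw [div_pow, div_pow, eq_div_iff (by positivity)]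
      field_simp
      linear_combination hkey2
    rw [h1, Real.sqrt_sq (by positivity)]
  have key : 0 < Real.sin ϑB * Real.sin ϑA + Real.cos ϑB * Real.cos ϑA + Real.cos ϑB := by
    rw [hsinA, hsinB, hcosA, hcosB]
    exact main_alg nu nw s p q1 q2 q3 hnupos hnwpos h3U hspos hs1 hppos hσ
      hq1pos hq2pos hq3pos hq1sq hq2sq hq3sq
  exact aux_angle ϑA ϑB hA0 hBπ key
end

section
/- Let κ = tan(β/2) with 0 < β ≤ 2π/3 (so 0 < κ ≤ √3), let ε ≥ 0, and define for t > 0: f(t,κ) = 2·arctan( ((κ + εκ + 2t + εt)·κ) / (κ + εκ + εt) ) − arctan t + arctan κ − π. Then f(t, √3) is strictly decreasing in t on [0, ∞), f(0, √3) = 0, and consequently f(t, κ) < 0 for all t > 0 and 0 < κ ≤ √3. -/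
open Real Set

/-!
For `t ≥ 0` the argument `r(t, κ) = N / D` of the first arctangent is strictly increasing in
`κ > 0`, hence so is `f(t, κ)`, and it suffices to treat `κ = √3`. There `r(0, √3) = √3` gives
`f(0, √3) = 0`, and `∂ₜ f(t, √3) = 12 (1 + ε) / (N² + D²) - 1 / (1 + t²) < 0` for `t > 0` because
`N² + D² - 12 (1 + ε) (1 + t²) = 12 ε (1 + ε) + 2√3 (1 + ε) (6 + 4 ε) t + 4 ε² t²`.
-/

theorem hasDerivAt_arctan_div {N D : ℝ → ℝ} {N' D' t : ℝ} (hN : HasDerivAt N N' t)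
    (hD : HasDerivAt D D' t) (hDt : D t ≠ 0) :
    HasDerivAt (fun x => arctan (N x / D x)) ((N' * D t - N t * D') / (N t ^ 2 + D t ^ 2)) t := by
  refine (hN.div hD hDt).arctan.congr_deriv ?_
  simp only [Pi.div_apply]
  field_simp
  ring

namespace AngleBound

variable {ε t κ : ℝ}

noncomputable def ratio (ε t κ : ℝ) : ℝ :=
  (κ + ε * κ + 2 * t + ε * t) * κ / (κ + ε * κ + ε * t)

noncomputable def angle (ε t κ : ℝ) : ℝ :=
  2 * arctan (ratio ε t κ) - arctan t + arctan κ - π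

theorem ratio_den_pos (hε : 0 ≤ ε) (ht : 0 ≤ t) (hκ : 0 < κ) : 0 < κ + ε * κ + ε * t := by
  positivity

theorem ratio_strictMonoOn (hε : 0 ≤ ε) (ht : 0 ≤ t) : StrictMonoOn (ratio ε t) (Ioi 0) := by
  intro κ₁ (h₁ : 0 < κ₁) κ₂ (h₂ : 0 < κ₂) h₁₂
  rw [ratio, ratio, div_lt_div_iff₀ (ratio_den_pos hε ht h₁) (ratio_den_pos hε ht h₂)]
  have hpos : 0 < (κ₂ - κ₁) *
      (κ₁ * κ₂ * (1 + ε) ^ 2 + ε * (1 + ε) * t * (κ₁ + κ₂) + ε * (2 + ε) * t ^ 2) := by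
    have := sub_pos.2 h₁₂
    positivity
  linear_combination hpos

theorem angle_strictMonoOn (hε : 0 ≤ ε) (ht : 0 ≤ t) : StrictMonoOn (angle ε t) (Ioi 0) := by
  intro κ₁ h₁ κ₂ h₂ h₁₂
  have hr := arctan_strictMono (ratio_strictMonoOn hε ht h₁ h₂ h₁₂)
  have hκ := arctan_strictMono h₁₂
  simp only [angle]
  linarith

theorem hasDerivAt_angle (hD : κ + ε * κ + ε * t ≠ 0) :
    HasDerivAt (angle ε · κ)
      (4 * κ ^ 2 * (1 + ε) /
          (((κ + ε * κ + 2 * t + ε * t) * κ) ^ 2 + (κ + ε * κ + ε * t) ^ 2) - 1 / (1 + t ^ 2)) t := by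
  have hN : HasDerivAt (fun x => (κ + ε * κ + 2 * x + ε * x) * κ) ((2 + ε) * κ) t := by
    simpa using ((((hasDerivAt_id' t).const_mul 2).const_add (κ + ε * κ)).add
      ((hasDerivAt_id' t).const_mul ε)).mul_const κ
  have hD' : HasDerivAt (fun x => κ + ε * κ + ε * x) ε t := by
    simpa using ((hasDerivAt_id' t).const_mul ε).const_add (κ + ε * κ)
  refine ((((hasDerivAt_arctan_div hN hD' hD).const_mul 2).sub (hasDerivAt_arctan t)).add_const
    (arctan κ)).sub_const π |>.congr_deriv ?_
  ring

theorem deriv_angle_sqrt_three_neg (hε : 0 ≤ ε) (ht : 0 < t) :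
    4 * √3 ^ 2 * (1 + ε) /
        (((√3 + ε * √3 + 2 * t + ε * t) * √3) ^ 2 + (√3 + ε * √3 + ε * t) ^ 2)
      - 1 / (1 + t ^ 2) < 0 := by
  have h3 : √3 ^ 2 = 3 := sq_sqrt (by norm_num)
  have hsurplus : 0 < 12 * ε * (1 + ε) + 2 * √3 * (1 + ε) * (6 + 4 * ε) * t + 4 * ε ^ 2 * t ^ 2 := by
    positivity
  rw [sub_neg, div_lt_div_iff₀ (by positivity) (by positivity)]
  linear_combination hsurplus - ((1 + ε) ^ 2 * (√3 ^ 2 + 4) - 4 * (1 + ε)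
    + 2 * √3 * (1 + ε) * (2 + ε) * t + ((2 + ε) ^ 2 - 4 * (1 + ε)) * t ^ 2) * h3

theorem angle_sqrt_three_strictAntiOn (hε : 0 ≤ ε) : StrictAntiOn (angle ε · √3) (Ici 0) := by
  have hderiv : ∀ t ∈ Ici (0 : ℝ), HasDerivAt (angle ε · √3) _ t := fun t ht =>
    hasDerivAt_angle (ratio_den_pos hε ht (by positivity)).ne'
  refine strictAntiOn_of_hasDerivWithinAt_neg (convex_Ici 0)
    (fun t ht => (hderiv t ht).continuousAt.continuousWithinAt)
    (fun t ht => (hderiv t (interior_subset ht)).hasDerivWithinAt) fun t ht => ?_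
  rw [interior_Ici] at ht
  exact deriv_angle_sqrt_three_neg hε ht

theorem angle_zero_sqrt_three (hε : 0 ≤ ε) : angle ε 0 √3 = 0 := by
  have hr : ratio ε 0 √3 = √3 := by
    rw [ratio]
    field_simp
    ring
  rw [angle, hr, arctan_sqrt_three, arctan_zero]
  ring

end AngleBound

open AngleBound in
/-- With `κ = tan(β/2)`, `0 < κ ≤ √3`, `ε ≥ 0`, and
`f(t,κ) = 2·arctan(((κ+εκ+2t+εt)κ)/(κ+εκ+εt)) − arctan t + arctan κ − π`:
`f(·,√3)` is strictly decreasing on `[0,∞)`, `f(0,√3) = 0`, and consequently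
`f(t,κ) < 0` for all `t > 0` and `0 < κ ≤ √3`. -/
theorem stmt8 (ε : ℝ) (hε : 0 ≤ ε) (f : ℝ → ℝ → ℝ)
    (hf : ∀ t κ : ℝ, f t κ =
      2 * arctan (((κ + ε * κ + 2 * t + ε * t) * κ) / (κ + ε * κ + ε * t))
        - arctan t + arctan κ - π) :
    StrictAntiOn (fun t => f t (Real.sqrt 3)) (Set.Ici 0) ∧
    f 0 (Real.sqrt 3) = 0 ∧
    ∀ t κ : ℝ, 0 < t → 0 < κ → κ ≤ Real.sqrt 3 → f t κ < 0 := by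
  obtain rfl : f = fun t κ => angle ε t κ := funext₂ hf
  refine ⟨angle_sqrt_three_strictAntiOn hε, angle_zero_sqrt_three hε, fun t κ ht hκ hκ3 => ?_⟩
  calc angle ε t κ ≤ angle ε t √3 :=
        (angle_strictMonoOn hε ht.le).monotoneOn hκ (by positivity : (0 : ℝ) < √3) hκ3
    _ < angle ε 0 √3 := angle_sqrt_three_strictAntiOn hε self_mem_Ici ht.le ht
    _ = 0 := angle_zero_sqrt_three hε
end

section
/- In the isosceles-triangle configuration (apex angle β, ∠A₁OA₂ = α ∈ (β, π], P on open segment V P̄, ϑ_A = ∠A₁PO, ϑ_B = ∠A₁PA₂): if ϑ_A ≥ β, then 2ϑ_B − ϑ_A < π. -/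
/-!
Since `P` lies strictly between `V` and `A₁`, the angle of the triangle `A₁ P A₂` at `A₁` is the
base angle `(π - β) / 2` of the isosceles triangle, and its angle at `A₂` is positive; hence
`ϑ_B < (π + β) / 2`, and `ϑ_A ≥ β` gives `2 ϑ_B - ϑ_A < π`. That `P` lies strictly between `V`
and `A₁` comes from the fact that the line through `A₂` and the point `O ≠ V` of the median
meets the line `V A₁` inside the half-open side `(V, A₁]`.
-/

open Real EuclideanGeometry AffineMap

section Affine

variable {V P : Type*} [AddCommGroup V] [Module ℝ V] [AddTorsor V P]

theorem linearIndependent_vsub_of_notMem_affineSpan_pair {v a₁ a₂ : P} (h₁₂ : a₁ ≠ a₂)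
    (hv : v ∉ line[ℝ, a₁, a₂]) : LinearIndependent ℝ ![a₁ -ᵥ v, a₂ -ᵥ v] := by
  have hind := affineIndependent_of_ne_of_notMem_of_mem_of_mem h₁₂ hv
    (left_mem_affineSpan_pair ℝ a₁ a₂) (right_mem_affineSpan_pair ℝ a₁ a₂)
  rw [affineIndependent_iff_linearIndependent_vsub ℝ _ 0,
    ← linearIndependent_equiv (finSuccAboveEquiv (0 : Fin 3))] at hind
  convert! hind using 1
  ext i
  fin_cases i <;> rfl

theorem wbtw_and_ne_of_mem_affineSpan_pair_of_wbtw {v a₁ a₂ m o q : P}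
    (hind : LinearIndependent ℝ ![a₁ -ᵥ v, a₂ -ᵥ v]) (hm : Wbtw ℝ a₁ m a₂) (hma₂ : m ≠ a₂)
    (ho : Wbtw ℝ v o m) (hov : o ≠ v) (hq₁ : q ∈ line[ℝ, a₂, o]) (hq₂ : q ∈ line[ℝ, v, a₁]) :
    Wbtw ℝ v q a₁ ∧ q ≠ v := by
  obtain ⟨μ, ⟨hμ0, hμ1⟩, rfl⟩ := hm
  obtain ⟨τ, ⟨hτ0, hτ1⟩, rfl⟩ := ho
  obtain ⟨r, rfl⟩ := mem_affineSpan_pair_iff_exists_lineMap_eq.1 hq₁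
  obtain ⟨s, hs⟩ := mem_affineSpan_pair_iff_exists_lineMap_eq.1 hq₂
  have hμ : μ < 1 := lt_of_le_of_ne hμ1 (by rintro rfl; simp at hma₂)
  have hτ : 0 < τ := lt_of_le_of_ne hτ0 (by rintro rfl; simp at hov)
  -- in the basis `a₁ -ᵥ v, a₂ -ᵥ v` this forces `r (1 - τ μ) = 1` and
  -- `s = r τ (1 - μ) = 1 - r (1 - τ)`, whence `0 < s ≤ 1`
  have hvec : (s - r * τ * (1 - μ)) • (a₁ -ᵥ v) + (r - r * τ * μ - 1) • (a₂ -ᵥ v) = 0 := by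
    have h := congrArg (· -ᵥ v) hs
    simp only [lineMap_vsub_left] at h
    rw [← vsub_vadd (lineMap a₂ _ r) a₂, vadd_vsub_assoc, lineMap_vsub_left,
      ← vsub_sub_vsub_cancel_right _ a₂ v, lineMap_vsub_left,
      ← vsub_vadd (lineMap a₁ a₂ μ) a₁, vadd_vsub_assoc, lineMap_vsub_left,
      ← vsub_sub_vsub_cancel_right a₂ a₁ v] at h
    linear_combination (norm := module) h
  obtain ⟨hs', hr'⟩ := LinearIndependent.pair_iff.1 hind _ _ hvec
  have hv₁ : v ≠ a₁ := by
    rintro rfl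
    simpa using hind.ne_zero 0
  have hτμ : τ * μ < 1 := by nlinarith
  have hr : 0 < r := by nlinarith
  have hs0 : 0 < s := by nlinarith [mul_pos (mul_pos hr hτ) (sub_pos.2 hμ)]
  have hs1 : s ≤ 1 := by nlinarith [mul_nonneg hr.le (sub_nonneg.2 hτ1)]
  rw [← hs]
  exact ⟨⟨s, ⟨hs0.le, hs1⟩, rfl⟩, fun h ↦ (lineMap_eq_left_iff.1 h).elim hv₁ hs0.ne'⟩

end Affine

section Euclidean

variable {V P : Type*} [NormedAddCommGroup V] [InnerProductSpace ℝ V] [MetricSpace P]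
  [NormedAddTorsor V P]

theorem not_collinear_of_sbtw_of_notMem_affineSpan_pair {v a₁ a₂ p : P} (h₁₂ : a₁ ≠ a₂)
    (hv : v ∉ line[ℝ, a₁, a₂]) (hp : Sbtw ℝ v p a₁) : ¬Collinear ℝ {a₁, a₂, p} := by
  intro hcol
  have hp₁₂ : p ∈ line[ℝ, a₁, a₂] := hcol.mem_affineSpan_of_mem_of_ne (by simp) (by simp)
    (by simp) h₁₂
  exact hv (affineSpan_pair_le_of_mem_of_mem (left_mem_affineSpan_pair ℝ a₁ a₂) hp₁₂
    hp.left_mem_affineSpan)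

theorem angle_lt_of_sbtw_of_dist_eq {v a₁ a₂ p : P} (hiso : dist v a₁ = dist v a₂)
    (h₁₂ : a₁ ≠ a₂) (hv : v ∉ line[ℝ, a₁, a₂]) (hp : Sbtw ℝ v p a₁) :
    ∠ a₁ p a₂ < (π + ∠ a₁ v a₂) / 2 := by
  have hbase : ∠ v a₁ a₂ = ∠ v a₂ a₁ := angle_eq_angle_of_dist_eq hiso
  have hsum_v := angle_add_angle_add_angle_eq_pi a₂ hp.left_ne_right
  have hsum_p := angle_add_angle_add_angle_eq_pi a₂ hp.ne_right.symm
  have hpa₁ : ∠ p a₁ a₂ = ∠ v a₁ a₂ := hp.symm.angle_eq_left a₂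
  have hpos : 0 < ∠ a₁ a₂ p :=
    angle_pos_of_not_collinear (not_collinear_of_sbtw_of_notMem_affineSpan_pair h₁₂ hv hp)
  rw [angle_comm a₂ p a₁] at hsum_p
  rw [angle_comm a₂ a₁ v] at hsum_v
  linarith

end Euclidean

theorem stmt9_general (V A₁ A₂ H O Pbar P : EuclideanSpace ℝ (Fin 2)) (α β ϑA ϑB : ℝ)
    (hiso : dist V A₁ = dist V A₂)
    (hH : H = midpoint ℝ A₁ A₂)
    (hO : O ∈ segment ℝ V H)
    (hnd : V ∉ affineSpan ℝ ({A₁, A₂} : Set (EuclideanSpace ℝ (Fin 2))))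
    (hβdef : β = ∠ A₁ V A₂)
    (hαdef : α = ∠ A₁ O A₂)
    (hβpos : 0 < β) (hβα : β < α)
    (hPbar₁ : Pbar ∈ affineSpan ℝ ({A₂, O} : Set (EuclideanSpace ℝ (Fin 2))))
    (hPbar₂ : Pbar ∈ affineSpan ℝ ({V, A₁} : Set (EuclideanSpace ℝ (Fin 2))))
    (hP : P ∈ openSegment ℝ V Pbar)
    (hϑB : ϑB = ∠ A₁ P A₂)
    (hAβ : β ≤ ϑA) :
    2 * ϑB - ϑA < π := by
  have hVA₁ : V ≠ A₁ := by
    rintro rfl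
    exact hnd (left_mem_affineSpan_pair ℝ V A₂)
  have hA₁A₂ : A₁ ≠ A₂ := by
    rintro rfl
    rw [angle_self_of_ne hVA₁.symm] at hβdef
    linarith
  have hOV : O ≠ V := by
    rintro rfl
    linarith
  obtain ⟨hPbar, hPbarV⟩ := wbtw_and_ne_of_mem_affineSpan_pair_of_wbtw
    (linearIndependent_vsub_of_notMem_affineSpan_pair hA₁A₂ hnd) (hH ▸ wbtw_midpoint ℝ A₁ A₂)
    (hH ▸ (midpoint_eq_right_iff ℝ).not.2 hA₁A₂) (mem_segment_iff_wbtw.1 hO) hOV hPbar₁ hPbar₂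
  have hVPPbar : Sbtw ℝ V P Pbar :=
    sbtw_iff_mem_image_Ioo_and_ne.2 ⟨openSegment_eq_image_lineMap ℝ V Pbar ▸ hP, hPbarV.symm⟩
  have hϑB_lt := angle_lt_of_sbtw_of_dist_eq hiso hA₁A₂ hnd (hPbar.trans_sbtw_left hVPPbar)
  rw [hϑB]
  linarith

/-- In the isosceles triangle `V A₂ A₁` with `|VA₁| = |VA₂|`, midpoint `H` of `A₁A₂`,
`O` on segment `VH` with `β = ∠A₁VA₂ < α = ∠A₁OA₂ ≤ π`, `P̄` the intersection of
lines `A₂O` and `VA₁`, and `P` on the open segment `V P̄`, the angles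
`ϑ_A = ∠A₁PO` and `ϑ_B = ∠A₁PA₂` satisfy: if `ϑ_A ≥ β` then `2ϑ_B − ϑ_A < π`. -/
theorem stmt9 (V A₁ A₂ H O Pbar P : EuclideanSpace ℝ (Fin 2)) (α β ϑA ϑB : ℝ)
    (hiso : dist V A₁ = dist V A₂)
    (hH : H = midpoint ℝ A₁ A₂)
    (hO : O ∈ segment ℝ V H)
    (hnd : V ∉ affineSpan ℝ ({A₁, A₂} : Set (EuclideanSpace ℝ (Fin 2))))
    (hβdef : β = ∠ A₁ V A₂)
    (hαdef : α = ∠ A₁ O A₂)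
    (hβpos : 0 < β) (hβα : β < α) (hαπ : α ≤ π)
    (hPbar₁ : Pbar ∈ affineSpan ℝ ({A₂, O} : Set (EuclideanSpace ℝ (Fin 2))))
    (hPbar₂ : Pbar ∈ affineSpan ℝ ({V, A₁} : Set (EuclideanSpace ℝ (Fin 2))))
    (hP : P ∈ openSegment ℝ V Pbar)
    (hϑA : ϑA = ∠ A₁ P O) (hϑB : ϑB = ∠ A₁ P A₂)
    (hAβ : β ≤ ϑA) :
    2 * ϑB - ϑA < π :=
  stmt9_general V A₁ A₂ H O Pbar P α β ϑA ϑB hiso hH hO hnd hβdef hαdef hβpos hβα hPbar₁ hPbar₂ hP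
    hϑB hAβ
end

section
/- Fix β ∈ (0, π) and l_N > 0, and for λ ∈ (0, l_N/(1+sin β)) let ϑ_λ ∈ ((π+3β)/4, (π+β)/2) satisfy λ(1 + sin β/sin(2ϑ_λ − β)) = l_N. Define ϑ_B(λ) via cot ϑ_B(λ) = cot β − sin(2ϑ_λ − β)/(2 sin β · sin ϑ_λ · cos(ϑ_λ − β)), with ϑ_B(λ) ∈ (0, π). Then ϑ_λ + ϑ_B(λ) > (π + 3β)/2. -/
/-!
Put `φ = (π + 3β)/2 - ϑ_λ ∈ (0, π)`. Since `cot` decreases on `(0, π)`, the claim `φ < ϑ_B` follows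
from `cot ϑ_B < cot φ`. Multiplied by the positive factor `sin β sin ϑ_λ cos(ϑ_λ - β) cos(ϑ_λ - 3β/2)`,
the difference `cot ϑ_B - cot φ` becomes `cos(ϑ_λ - β/2) cos(2ϑ_λ - 3β/2) sin(β/2)`, which is negative
because `2ϑ_λ - 3β/2 ∈ (π/2, π)`.
-/

open Real Set

theorem Real.cot_sub_cot {a b : ℝ} (ha : sin a ≠ 0) (hb : sin b ≠ 0) :
    cot a - cot b = sin (b - a) / (sin a * sin b) := by
  rw [cot_eq_cos_div_sin, cot_eq_cos_div_sin, sin_sub]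
  field_simp

theorem Real.strictAntiOn_cot : StrictAntiOn cot (Ioo 0 π) := by
  intro a ha b hb hab
  have hsa := sin_pos_of_pos_of_lt_pi ha.1 ha.2
  have hsb := sin_pos_of_pos_of_lt_pi hb.1 hb.2
  rw [← sub_pos, cot_sub_cot hsa.ne' hsb.ne']
  exact div_pos (sin_pos_of_pos_of_lt_pi (by linarith) (by linarith [ha.1, hb.2]))
    (mul_pos hsa hsb)

theorem Real.sin_mul_cos_sub_sin_mul_cos (u h : ℝ) :
    sin u * cos (u - 2 * h) - sin (u - h) * cos (u - 3 * h) = sin h * cos (2 * u - 3 * h) := by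
  have h₁ := two_mul_sin_mul_cos u (u - 2 * h)
  have h₂ := two_mul_sin_mul_cos (u - h) (u - 3 * h)
  have h₃ := sin_sub_sin (2 * u - 2 * h) (2 * u - 4 * h)
  ring_nf at h₁ h₂ h₃ ⊢
  linear_combination (h₁ - h₂ + h₃) / 2

theorem Real.cot_sub_div_sub_cot_mul (β ϑ : ℝ) (hsβ : sin β ≠ 0) (hsϑ : sin ϑ ≠ 0)
    (hc : cos (ϑ - β) ≠ 0) (hc' : cos (ϑ - 3 * β / 2) ≠ 0) :
    (cot β - sin (2 * ϑ - β) / (2 * sin β * sin ϑ * cos (ϑ - β)) - cot ((π + 3 * β) / 2 - ϑ)) *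
        (sin β * sin ϑ * cos (ϑ - β) * cos (ϑ - 3 * β / 2)) =
      cos (ϑ - β / 2) * cos (2 * ϑ - 3 * β / 2) * sin (β / 2) := by
  have hφ : sin ((π + 3 * β) / 2 - ϑ) = cos (ϑ - 3 * β / 2) := by
    rw [← sin_pi_div_two_sub]; ring_nf
  have hφβ : sin ((π + 3 * β) / 2 - ϑ - β) = cos (ϑ - β / 2) := by
    rw [← sin_pi_div_two_sub]; ring_nf
  have hdouble : sin (2 * ϑ - β) = 2 * sin (ϑ - β / 2) * cos (ϑ - β / 2) := by
    rw [← sin_two_mul]; ring_nf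
  have hprod := sin_mul_cos_sub_sin_mul_cos ϑ (β / 2)
  rw [show ϑ - 2 * (β / 2) = ϑ - β by ring, show ϑ - 3 * (β / 2) = ϑ - 3 * β / 2 by ring,
    show 2 * ϑ - 3 * (β / 2) = 2 * ϑ - 3 * β / 2 by ring] at hprod
  have hcot_sub := cot_sub_cot hsβ (hφ ▸ hc')
  rw [hφ, hφβ] at hcot_sub
  rw [sub_right_comm, hcot_sub, hdouble]
  generalize sin β = sβ, sin ϑ = sϑ, cos (ϑ - β) = c, cos (ϑ - 3 * β / 2) = c',
    cos (ϑ - β / 2) = e, sin (ϑ - β / 2) = f, cos (2 * ϑ - 3 * β / 2) = k at *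
  field_simp
  linear_combination e * hprod

theorem stmt15_general (β ϑlam ϑB : ℝ) (hβ : 0 < β) (hβπ : β < π)
    (hϑlam : ϑlam ∈ Set.Ioo ((π + 3 * β) / 4) ((π + β) / 2))
    (hϑB : ϑB ∈ Set.Ioo 0 π)
    (hcot : cos ϑB / sin ϑB =
      cos β / sin β -
        sin (2 * ϑlam - β) / (2 * sin β * sin ϑlam * cos (ϑlam - β))) :
    (π + 3 * β) / 2 < ϑlam + ϑB := by
  obtain ⟨hϑ₁, hϑ₂⟩ := hϑlam
  have hφ : (π + 3 * β) / 2 - ϑlam ∈ Ioo 0 π := ⟨by linarith, by linarith⟩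
  suffices cot ϑB < cot ((π + 3 * β) / 2 - ϑlam) by
    linarith [(strictAntiOn_cot.lt_iff_gt hϑB hφ).mp this]
  have hsβ : 0 < sin β := sin_pos_of_pos_of_lt_pi hβ hβπ
  have hsϑ : 0 < sin ϑlam := sin_pos_of_pos_of_lt_pi (by linarith) (by linarith)
  have hc : 0 < cos (ϑlam - β) := cos_pos_of_mem_Ioo ⟨by linarith, by linarith⟩
  have hc' : 0 < cos (ϑlam - 3 * β / 2) := cos_pos_of_mem_Ioo ⟨by linarith, by linarith⟩
  have hcβ : 0 < cos (ϑlam - β / 2) := cos_pos_of_mem_Ioo ⟨by linarith, by linarith⟩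
  have hsβ' : 0 < sin (β / 2) := sin_pos_of_pos_of_lt_pi (by linarith) (by linarith)
  have hneg : cos (2 * ϑlam - 3 * β / 2) < 0 :=
    cos_neg_of_pi_div_two_lt_of_lt (by linarith) (by linarith)
  have key := cot_sub_div_sub_cot_mul β ϑlam hsβ.ne' hsϑ.ne' hc.ne' hc'.ne'
  rw [cot_eq_cos_div_sin β, ← hcot, ← cot_eq_cos_div_sin] at key
  have hprod_neg : (cot ϑB - cot ((π + 3 * β) / 2 - ϑlam)) *
      (sin β * sin ϑlam * cos (ϑlam - β) * cos (ϑlam - 3 * β / 2)) < 0 := by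
    rw [key]
    exact mul_neg_of_neg_of_pos (mul_neg_of_pos_of_neg hcβ hneg) hsβ'
  exact sub_neg.mp (neg_of_mul_neg_left hprod_neg (by positivity))

/-- If `ϑ_λ ∈ ((π+3β)/4, (π+β)/2)` satisfies `λ(1 + sin β/sin(2ϑ_λ−β)) = l_N` and
`ϑ_B ∈ (0, π)` is defined by
`cot ϑ_B = cot β − sin(2ϑ_λ−β)/(2 sin β sin ϑ_λ cos(ϑ_λ−β))`, then
`ϑ_λ + ϑ_B > (π+3β)/2`. -/
theorem stmt15 (β lN lam ϑlam ϑB : ℝ) (hβ : 0 < β) (hβπ : β < π) (hlN : 0 < lN)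
    (hlam : lam ∈ Set.Ioo 0 (lN / (1 + sin β)))
    (hϑlam : ϑlam ∈ Set.Ioo ((π + 3 * β) / 4) ((π + β) / 2))
    (heq : lam * (1 + sin β / sin (2 * ϑlam - β)) = lN)
    (hϑB : ϑB ∈ Set.Ioo 0 π)
    (hcot : cos ϑB / sin ϑB =
      cos β / sin β -
        sin (2 * ϑlam - β) / (2 * sin β * sin ϑlam * cos (ϑlam - β))) :
    (π + 3 * β) / 2 < ϑlam + ϑB :=
  stmt15_general β ϑlam ϑB hβ hβπ hϑlam hϑB hcot
end
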